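/- The set of locally adjointable endomorphisms of a Hilbert C*-module M forms a Banach subalgebra of the Banach algebra End_A(M) of all bounded A-linear endomorphisms of M; in particular, the composition of two locally adjointable endomorphisms is locally adjointable. -/

import Mathlib

open scoped RightActions
open Filter

/-- `S` is an adjoint of `T` with respect to the `A`-valued inner products:
`⟪T x, y⟫ = ⟪x, S y⟫` for all `x, y`. -/
def IsAdjointPair (A : Type*) {E F : Type*} [Inner A E] [Inner A F]
    (T : E → F) (S : F → E) : Prop :=
  ∀ (x : E) (y : F), (inner A (T x) y : A) = inner A x (S y)

/-- `T` is adjointable: it possesses an adjoint. -/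
def HasAdjoint (A : Type*) {E F : Type*} [Inner A E] [Inner A F] (T : E → F) : Prop :=
  ∃ S : F → E, IsAdjointPair A T S

/-- `T` is `A`-linear: it commutes with the right `A`-action. -/
def IsALinear (A : Type*) {E F : Type*} [SMul Aᵐᵒᵖ E] [SMul Aᵐᵒᵖ F] (T : E → F) : Prop :=
  ∀ (x : E) (a : A), T (x <• a) = T x <• a

/-- The Hilbert C*-module class as it stood in Mathlib of December 2024: a right `A`-module
(`SMul Aᵐᵒᵖ E`) with inner product `A`-linear on the right, `⟪x, y <• a⟫ = ⟪x, y⟫ * a`. -/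
class RightCStarModule (A E : Type*) [NonUnitalSemiring A] [StarRing A]
    [Module ℂ A] [AddCommGroup E] [Module ℂ E] [PartialOrder A] [SMul Aᵐᵒᵖ E] [Norm A] [Norm E]
    extends Inner A E where
  inner_add_right {x} {y} {z} : inner x (y + z) = inner x y + inner x z
  inner_self_nonneg {x} : 0 ≤ inner x x
  inner_self {x} : inner x x = 0 ↔ x = 0
  inner_op_smul_right {a : A} {x y : E} : inner x (y <• a) = inner x y * a
  inner_smul_right_complex {z : ℂ} {x} {y} : inner x (z • y) = z • inner x y
  star_inner x y : star (inner x y) = inner y x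
  norm_eq_sqrt_norm_inner_self x : ‖x‖ = √‖inner x x‖

/-- The inner product of `A` as a (right) C*-module over itself, as in Mathlib of
December 2024: `⟪x, y⟫ = star x * y`. -/
def RightCStarModule.innerSelf (A : Type*) [NonUnitalCStarAlgebra A] : Inner A A :=
  ⟨fun x y => star x * y⟩

/-- A bounded operator `T : M → N` of Hilbert C*-modules is *locally adjointable* if
`T ∘ γ` is adjointable for every adjointable (`A`-linear bounded) `γ : A → M`. -/
def LocallyAdjointable (A : Type*) [NonUnitalCStarAlgebra A] [PartialOrder A]
    [StarOrderedRing A] {M N : Type*}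
    [NormedAddCommGroup M] [NormedSpace ℂ M] [SMul Aᵐᵒᵖ M] [RightCStarModule A M]
    [Inner A N] (T : M → N) : Prop :=
  ∀ γ : A →L[ℂ] M, IsALinear A ⇑γ → @HasAdjoint A A M (RightCStarModule.innerSelf A) _ ⇑γ →
    @HasAdjoint A A N (RightCStarModule.innerSelf A) _ (T ∘ ⇑γ)

/-! Everything reduces to facts about adjoints of bounded maps `E → F` between Hilbert
C*-modules. Adjoints add and scale with the maps, and `F ∘ G ∘ γ = F ∘ (G ∘ γ)` where `G ∘ γ`
is again an adjointable `A`-linear map `A → K`. For closedness, Cauchy–Schwarz gives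
`‖S y‖ ≤ ‖T‖ * ‖y‖` for an adjoint `S` of `T`; so if `Tₙ → T` in norm, the adjoints `Sₙ`
converge pointwise (the domain is complete) to an adjoint of `T`. `A`-linearity is tested
against the continuous functionals `⟪z, ·⟫`, so it is a closed condition as well. -/

open scoped InnerProductSpace

namespace RightCStarModule

variable {A : Type*} [NonUnitalCStarAlgebra A] [PartialOrder A]
variable {E : Type*} [NormedAddCommGroup E] [NormedSpace ℂ E] [SMul Aᵐᵒᵖ E]
  [RightCStarModule A E]

theorem inner_add_left {x y z : E} : ⟪x + y, z⟫_A = ⟪x, z⟫_A + ⟪y, z⟫_A := by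
  rw [← star_inner z, inner_add_right, star_add, star_inner, star_inner]

theorem inner_smul_left_complex {c : ℂ} {x y : E} : ⟪c • x, y⟫_A = star c • ⟪x, y⟫_A := by
  rw [← star_inner y, inner_smul_right_complex, star_smul, star_inner]

theorem inner_op_smul_left {a : A} {x y : E} : ⟪x <• a, y⟫_A = star a * ⟪x, y⟫_A := by
  rw [← star_inner y, inner_op_smul_right, star_mul, star_inner]

variable (A) in
def innerₛₗ : E →ₗ⋆[ℂ] E →ₗ[ℂ] A where
  toFun x :=
    { toFun := fun y => ⟪x, y⟫_A
      map_add' := fun _ _ => inner_add_right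
      map_smul' := fun _ _ => inner_smul_right_complex }
  map_add' _ _ := LinearMap.ext fun _ => inner_add_left
  map_smul' _ _ := LinearMap.ext fun _ => inner_smul_left_complex

theorem innerₛₗ_apply (x y : E) : innerₛₗ A x y = ⟪x, y⟫_A := rfl

theorem inner_zero_right {x : E} : ⟪x, 0⟫_A = 0 := by
  simp only [← innerₛₗ_apply, map_zero]

theorem inner_sub_right {x y z : E} : ⟪x, y - z⟫_A = ⟪x, y⟫_A - ⟪x, z⟫_A := by
  simp only [← innerₛₗ_apply, map_sub]

theorem inner_sub_left {x y z : E} : ⟪x - y, z⟫_A = ⟪x, z⟫_A - ⟪y, z⟫_A := by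
  simp only [← innerₛₗ_apply, map_sub, LinearMap.sub_apply]

theorem inner_smul_left_real {r : ℝ} {x y : E} : ⟪r • x, y⟫_A = r • ⟪x, y⟫_A := by
  rw [← Complex.coe_smul, inner_smul_left_complex, Complex.star_def, Complex.conj_ofReal,
    Complex.coe_smul]

theorem inner_smul_right_real {r : ℝ} {x y : E} : ⟪x, r • y⟫_A = r • ⟪x, y⟫_A := by
  rw [← Complex.coe_smul, inner_smul_right_complex, Complex.coe_smul]

theorem norm_sq_eq (x : E) : ‖x‖ ^ 2 = ‖⟪x, x⟫_A‖ := by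
  rw [norm_eq_sqrt_norm_inner_self (A := A), Real.sq_sqrt (norm_nonneg _)]

theorem ext_inner_left {x y : E} (h : ∀ z : E, ⟪z, x⟫_A = ⟪z, y⟫_A) : x = y := by
  rw [← sub_eq_zero, ← inner_self (A := A), inner_sub_right, h, sub_self]

variable [StarOrderedRing A]

theorem inner_mul_inner_swap_le (x y : E) : ⟪y, x⟫_A * ⟪x, y⟫_A ≤ ‖x‖ ^ 2 • ⟪y, y⟫_A := by
  rcases eq_or_ne x 0 with rfl | hx
  · simp [inner_zero_right (A := A)]
  have key (a : A) : (0 : A) ≤ ‖x‖ ^ 2 • (star a * a) - ‖x‖ ^ 2 • (star a * ⟪x, y⟫_A)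
      - ‖x‖ ^ 2 • (⟪y, x⟫_A * a) + ‖x‖ ^ 2 • (‖x‖ ^ 2 • ⟪y, y⟫_A) :=
    calc (0 : A) ≤ ⟪x <• a - ‖x‖ ^ 2 • y, x <• a - ‖x‖ ^ 2 • y⟫_A := inner_self_nonneg
      _ = star a * ⟪x, x⟫_A * a - ‖x‖ ^ 2 • (star a * ⟪x, y⟫_A)
          - ‖x‖ ^ 2 • (⟪y, x⟫_A * a) + ‖x‖ ^ 2 • (‖x‖ ^ 2 • ⟪y, y⟫_A) := by
        simp only [inner_sub_right, inner_sub_left, inner_op_smul_right, inner_op_smul_left,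
          inner_smul_left_real, inner_smul_right_real, sub_mul, smul_mul_assoc, mul_assoc,
          smul_sub]
        abel
      _ ≤ _ := by
        gcongr
        calc _ ≤ ‖⟪x, x⟫_A‖ • (star a * a) :=
              CStarAlgebra.star_left_conjugate_le_norm_smul (star_inner x x)
          _ = ‖x‖ ^ 2 • (star a * a) := by rw [norm_sq_eq (A := A)]
  specialize key ⟪x, y⟫_A
  rw [star_inner] at key
  simp only [sub_self, zero_sub, le_neg_add_iff_add_le, add_zero] at key
  rwa [smul_le_smul_iff_of_pos_left (by positivity)] at key

theorem norm_inner_le (x y : E) : ‖⟪x, y⟫_A‖ ≤ ‖x‖ * ‖y‖ := by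
  have h : ‖⟪x, y⟫_A‖ ^ 2 ≤ (‖x‖ * ‖y‖) ^ 2 := by
    calc ‖⟪x, y⟫_A‖ ^ 2 = ‖⟪y, x⟫_A * ⟪x, y⟫_A‖ := by
          rw [← star_inner x, CStarRing.norm_star_mul_self, pow_two]
      _ ≤ ‖(‖x‖ ^ 2) • ⟪y, y⟫_A‖ := by
          refine CStarAlgebra.norm_le_norm_of_nonneg_of_le ?_ (inner_mul_inner_swap_le x y)
          rw [← star_inner x]
          exact star_mul_self_nonneg _
      _ = (‖x‖ * ‖y‖) ^ 2 := by rw [norm_smul, ← norm_sq_eq, mul_pow]; simp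
  exact (pow_le_pow_iff_left₀ (norm_nonneg _) (by positivity) two_ne_zero).mp h

variable (A) in
noncomputable def innerSL : E →L⋆[ℂ] E →L[ℂ] A :=
  LinearMap.mkContinuous₂ (innerₛₗ A) 1 fun x y => by
    rw [one_mul]; exact norm_inner_le x y

theorem continuous_inner {X : Type*} [TopologicalSpace X] {f g : X → E} (hf : Continuous f)
    (hg : Continuous g) : Continuous fun t => ⟪f t, g t⟫_A :=
  show Continuous fun t => innerSL A (f t) (g t) by fun_prop

-- The convention `⟪a, b⟫ = star a * b` of `LocallyAdjointable`. Not a global instance: Mathlib's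
-- `CStarModule A A` already equips `A` with `⟪a, b⟫ = b * star a`.
variable (A) in
abbrev self : RightCStarModule A A where
  toInner := innerSelf A
  inner_add_right := mul_add ..
  inner_self_nonneg := star_mul_self_nonneg _
  inner_self := CStarRing.star_mul_self_eq_zero_iff _
  inner_op_smul_right := (mul_assoc ..).symm
  inner_smul_right_complex := mul_smul_comm ..
  star_inner x y := show star (star x * y) = star y * x by rw [star_mul, star_star]
  norm_eq_sqrt_norm_inner_self x := show ‖x‖ = √‖star x * x‖ by
    rw [CStarRing.norm_star_mul_self, Real.sqrt_mul_self (norm_nonneg x)]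

end RightCStarModule

theorem IsALinear.comp {A E F G : Type*} [SMul Aᵐᵒᵖ E] [SMul Aᵐᵒᵖ F] [SMul Aᵐᵒᵖ G]
    {g : F → G} {f : E → F} (hg : IsALinear A g) (hf : IsALinear A f) : IsALinear A (g ∘ f) :=
  fun x a => by rw [Function.comp_apply, hf, hg, Function.comp_apply]

theorem isClosed_setOf_isALinear {A : Type*} [NonUnitalCStarAlgebra A] [PartialOrder A]
    [StarOrderedRing A] {E F : Type*} [NormedAddCommGroup E] [NormedSpace ℂ E] [SMul Aᵐᵒᵖ E]
    [NormedAddCommGroup F] [NormedSpace ℂ F] [SMul Aᵐᵒᵖ F] [RightCStarModule A F] :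
    IsClosed {T : E →L[ℂ] F | IsALinear A ⇑T} := by
  have h : {T : E →L[ℂ] F | IsALinear A ⇑T} =
      ⋂ (x : E) (a : A) (z : F), {T | ⟪z, T (x <• a)⟫_A = ⟪z, T x⟫_A * a} := by
    ext T
    simp only [Set.mem_iInter, Set.mem_ofPred_eq, ← RightCStarModule.inner_op_smul_right]
    exact ⟨fun hT x a z => by rw [hT x a], fun hT x a => RightCStarModule.ext_inner_left (hT x a)⟩
  rw [h]
  refine isClosed_iInter fun x => isClosed_iInter fun a => isClosed_iInter fun z => ?_
  exact isClosed_eq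
    (RightCStarModule.continuous_inner continuous_const (continuous_eval_const _))
    ((RightCStarModule.continuous_inner continuous_const (continuous_eval_const _)).mul_const a)

section Adjoint

variable {A : Type*} [NonUnitalCStarAlgebra A] [PartialOrder A]
variable {E F : Type*}
  [NormedAddCommGroup E] [NormedSpace ℂ E] [SMul Aᵐᵒᵖ E] [RightCStarModule A E]
  [NormedAddCommGroup F] [NormedSpace ℂ F] [SMul Aᵐᵒᵖ F] [RightCStarModule A F]

namespace IsAdjointPair

variable {T T₁ T₂ : E → F} {S S₁ S₂ : F → E}

theorem add (h₁ : IsAdjointPair A T₁ S₁) (h₂ : IsAdjointPair A T₂ S₂) :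
    IsAdjointPair A (T₁ + T₂) (S₁ + S₂) := fun x y => by
  rw [Pi.add_apply, Pi.add_apply, RightCStarModule.inner_add_left,
    RightCStarModule.inner_add_right, h₁, h₂]

theorem sub (h₁ : IsAdjointPair A T₁ S₁) (h₂ : IsAdjointPair A T₂ S₂) :
    IsAdjointPair A (T₁ - T₂) (S₁ - S₂) := fun x y => by
  rw [Pi.sub_apply, Pi.sub_apply, RightCStarModule.inner_sub_left,
    RightCStarModule.inner_sub_right, h₁, h₂]

theorem smul (h : IsAdjointPair A T S) (c : ℂ) : IsAdjointPair A (c • T) (star c • S) :=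
  fun x y => by
    rw [Pi.smul_apply, Pi.smul_apply, RightCStarModule.inner_smul_left_complex,
      RightCStarModule.inner_smul_right_complex, h]

theorem norm_apply_le [StarOrderedRing A] {T : E →L[ℂ] F} (h : IsAdjointPair A T S) (y : F) :
    ‖S y‖ ≤ ‖T‖ * ‖y‖ := by
  rcases (norm_nonneg (S y)).eq_or_lt with hS | hS
  · rw [← hS]; positivity
  refine le_of_mul_le_mul_left ?_ hS
  calc ‖S y‖ * ‖S y‖ = ‖⟪T (S y), y⟫_A‖ := by
        rw [← sq, RightCStarModule.norm_sq_eq (A := A), h]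
    _ ≤ ‖T (S y)‖ * ‖y‖ := RightCStarModule.norm_inner_le _ _
    _ ≤ ‖T‖ * ‖S y‖ * ‖y‖ := by gcongr; exact T.le_opNorm _
    _ = ‖S y‖ * (‖T‖ * ‖y‖) := by ring

end IsAdjointPair

theorem HasAdjoint.add {T₁ T₂ : E → F} (h₁ : HasAdjoint A T₁) (h₂ : HasAdjoint A T₂) :
    HasAdjoint A (T₁ + T₂) :=
  let ⟨_, h₁⟩ := h₁; let ⟨_, h₂⟩ := h₂; ⟨_, h₁.add h₂⟩

theorem HasAdjoint.smul {T : E → F} (h : HasAdjoint A T) (c : ℂ) : HasAdjoint A (c • T) :=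
  let ⟨_, h⟩ := h; ⟨_, h.smul c⟩

variable [StarOrderedRing A]

theorem isClosed_setOf_hasAdjoint [CompleteSpace E] :
    IsClosed {T : E →L[ℂ] F | HasAdjoint A ⇑T} := by
  refine isClosed_of_closure_subset fun T hT => ?_
  obtain ⟨u, hu, hlim⟩ := mem_closure_iff_seq_limit.mp hT
  choose S hS using hu
  have hcauchy (y : F) : CauchySeq fun n => S n y := by
    obtain ⟨b, hb0, hbu, hb⟩ := cauchySeq_iff_le_tendsto_0.mp hlim.cauchySeq
    refine cauchySeq_iff_le_tendsto_0.mpr ⟨fun N => b N * ‖y‖,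
      fun N => mul_nonneg (hb0 N) (norm_nonneg y), fun n m N hn hm => ?_,
      by simpa using hb.mul_const ‖y‖⟩
    rw [dist_eq_norm]
    calc ‖S n y - S m y‖ ≤ ‖u n - u m‖ * ‖y‖ :=
          ((hS n).sub (hS m)).norm_apply_le (T := u n - u m) y
      _ ≤ b N * ‖y‖ := by gcongr; simpa only [dist_eq_norm] using hbu n m N hn hm
  choose S' hS' using fun y => cauchySeq_tendsto_of_complete (hcauchy y)
  refine show HasAdjoint A ⇑T from ⟨S', fun x y =>
    tendsto_nhds_unique (f := fun n => ⟪u n x, y⟫_A) (l := atTop) ?_ ?_⟩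
  · exact ((RightCStarModule.continuous_inner (continuous_eval_const x)
      continuous_const).tendsto T).comp hlim
  · exact (((RightCStarModule.continuous_inner continuous_const continuous_id).tendsto _).comp
      (hS' y)).congr fun n => (hS n x y).symm

end Adjoint

section LocallyAdjointable

variable {A : Type*} [NonUnitalCStarAlgebra A] [PartialOrder A] [StarOrderedRing A]
variable {E F : Type*}
  [NormedAddCommGroup E] [NormedSpace ℂ E] [SMul Aᵐᵒᵖ E] [RightCStarModule A E]
  [NormedAddCommGroup F] [NormedSpace ℂ F] [SMul Aᵐᵒᵖ F] [RightCStarModule A F]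

attribute [local instance] RightCStarModule.self

theorem LocallyAdjointable.add {T₁ T₂ : E → F} (h₁ : LocallyAdjointable A T₁)
    (h₂ : LocallyAdjointable A T₂) : LocallyAdjointable A (T₁ + T₂) :=
  fun γ hγ hγ' => (h₁ γ hγ hγ').add (h₂ γ hγ hγ')

theorem LocallyAdjointable.smul {T : E → F} (h : LocallyAdjointable A T) (c : ℂ) :
    LocallyAdjointable A (c • T) :=
  fun γ hγ hγ' => (h γ hγ hγ').smul c

theorem LocallyAdjointable.comp {G : Type*} [Inner A G] {T : F → G} {S : E →L[ℂ] F}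
    (hT : LocallyAdjointable A T) (hS : IsALinear A ⇑S) (hS' : LocallyAdjointable A ⇑S) :
    LocallyAdjointable A (T ∘ S) :=
  fun γ hγ hγ' => hT (S.comp γ) (hS.comp hγ) (hS' γ hγ hγ')

theorem isClosed_setOf_locallyAdjointable :
    IsClosed {T : E →L[ℂ] F | LocallyAdjointable A ⇑T} := by
  simp only [LocallyAdjointable, Set.ofPred_forall]
  exact isClosed_iInter fun γ => isClosed_iInter fun _ => isClosed_iInter fun _ =>
    isClosed_setOf_hasAdjoint.preimage (continuous_id.clm_comp continuous_const)

end LocallyAdjointable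
variable {A : Type*} [NonUnitalCStarAlgebra A] [PartialOrder A] [StarOrderedRing A]
variable {K N : Type*}
  [NormedAddCommGroup K] [NormedSpace ℂ K] [SMul Aᵐᵒᵖ K] [RightCStarModule A K]
  [NormedAddCommGroup N] [NormedSpace ℂ N] [SMul Aᵐᵒᵖ N] [RightCStarModule A N]

/-- The locally adjointable endomorphisms of a Hilbert C*-module `K` form a Banach
subalgebra of `End_A(K)`: they are closed under sum, scalar multiple and composition,
and form a norm-closed set; in particular, the composition of two locally adjointable
endomorphisms is locally adjointable. -/
theorem locallyAdjointable_banach_subalgebra :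
    (∀ F G : K →L[ℂ] K, IsALinear A ⇑F → IsALinear A ⇑G →
      LocallyAdjointable A ⇑F → LocallyAdjointable A ⇑G → LocallyAdjointable A ⇑(F + G)) ∧
    (∀ (c : ℂ) (F : K →L[ℂ] K), IsALinear A ⇑F →
      LocallyAdjointable A ⇑F → LocallyAdjointable A ⇑(c • F)) ∧
    IsClosed {F : K →L[ℂ] K | IsALinear A ⇑F ∧ LocallyAdjointable A ⇑F} ∧
    (∀ F G : K →L[ℂ] K, IsALinear A ⇑F → IsALinear A ⇑G →
      LocallyAdjointable A ⇑F → LocallyAdjointable A ⇑G →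
      LocallyAdjointable A ⇑(F.comp G)) :=
  ⟨fun _ _ _ _ hF hG => hF.add hG,
    fun c _ _ hF => hF.smul c,
    isClosed_setOf_isALinear.inter isClosed_setOf_locallyAdjointable,
    fun _ _ _ hG hF hG' => hF.comp hG hG'⟩
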